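/- Let Λ ⊆ ℝ be a set with lower Beurling density D⁻(Λ) > 2, and suppose Λ = Λ₁ ∪ Λ₂. Then D⁺_circ(Λ₁) > 1 or D⁺_circ(Λ₂) > 1. -/

import Mathlib

open MeasureTheory Filter Set
open scoped ENNReal

/-- The chord sum `∑_{λ ∈ Λ ∩ [−t,t]} √(t² − λ²)`, valued in `ℝ≥0∞`. -/
noncomputable def circChordSum (Λ : Set ℝ) (t : ℝ) : ℝ≥0∞ :=
  ∑' lam : (Λ ∩ Set.Icc (-t) t : Set ℝ), ENNReal.ofReal (Real.sqrt (t ^ 2 - (lam : ℝ) ^ 2))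

/-- Upper average circular density
`D⁺_circ(Λ) = limsup_{r→∞} (4/(πr²)) ∫₀^r (∑_{λ ∈ Λ∩[−t,t]} √(t²−λ²)) dt/t`
(automatically `∞` if `Λ` is uncountable, since the inner sum is then eventually infinite). -/
noncomputable def circDensity (Λ : Set ℝ) : ℝ≥0∞ :=
  Filter.limsup (fun r : ℝ =>
    ENNReal.ofReal (4 / (Real.pi * r ^ 2)) *
      ∫⁻ t in Set.Ioc (0 : ℝ) r, circChordSum Λ t / ENNReal.ofReal t) Filter.atTop

/-- Lower Beurling density `D⁻(Λ) = liminf_{r→∞} inf_x #(Λ∩[x−r,x+r])/(2r)`. -/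
noncomputable def lowerBeurlingDensity (Λ : Set ℝ) : ℝ≥0∞ :=
  Filter.liminf (fun r : ℝ =>
    ⨅ x : ℝ, ((Λ ∩ Set.Icc (x - r) (x + r)).encard : ℝ≥0∞) / ENNReal.ofReal (2 * r))
    Filter.atTop


open Real Topology

/-!
Summation by parts over the radii `u_k = t k / K` bounds the chord sum from below by
`∑_{k<K} (√(t² - u_k²) - √(t² - u_{k+1}²)) · #(Λ ∩ [-u_k, u_k])`. When `#(Λ ∩ [-s, s]) ≥ 2 b s` for
large `s`, this is a Riemann sum for `2 b t² ∫₀¹ √(1 - x²) dx = b (π / 2) t²`, up to `O(t² / K)`,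
and averaging `t ↦ b (π / 2) t` against `4 / (π r²) dt` gives `b`. Hence `D⁻(Λ) ≤ D⁺_circ(Λ)`.
The chord sum, and with it `D⁺_circ`, is subadditive under unions, so
`2 < D⁻(Λ) ≤ D⁺_circ(Λ₁) + D⁺_circ(Λ₂)`.
-/

lemma circChordSum_eq_tsum_indicator (Λ : Set ℝ) (t : ℝ) :
    circChordSum Λ t =
      ∑' x : Λ, (Icc (-t) t).indicator (fun y => ENNReal.ofReal √(t ^ 2 - y ^ 2)) x := by
  rw [circChordSum, tsum_subtype (Λ ∩ Icc (-t) t) (fun y => ENNReal.ofReal √(t ^ 2 - y ^ 2)),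
    tsum_subtype Λ, indicator_indicator]

lemma monotone_circChordSum (Λ : Set ℝ) : Monotone (circChordSum Λ) := by
  intro s t hst
  simp only [circChordSum_eq_tsum_indicator]
  refine ENNReal.tsum_le_tsum fun x => ?_
  by_cases hx : (x : ℝ) ∈ Icc (-s) s
  · have hs : 0 ≤ s := by linarith [hx.1, hx.2]
    rw [indicator_of_mem hx, indicator_of_mem (Icc_subset_Icc (neg_le_neg hst) hst hx)]
    gcongr
  · rw [indicator_of_notMem hx]
    exact zero_le

lemma circChordSum_union_le (Λ₁ Λ₂ : Set ℝ) (t : ℝ) :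
    circChordSum (Λ₁ ∪ Λ₂) t ≤ circChordSum Λ₁ t + circChordSum Λ₂ t := by
  rw [circChordSum, circChordSum, circChordSum, union_inter_distrib_right]
  exact ENNReal.tsum_union_le (fun y => ENNReal.ofReal √(t ^ 2 - y ^ 2)) _ _

noncomputable def circAverage (Λ : Set ℝ) (r : ℝ) : ℝ≥0∞ :=
  ENNReal.ofReal (4 / (π * r ^ 2)) * ∫⁻ t in Ioc (0 : ℝ) r, circChordSum Λ t / ENNReal.ofReal t

lemma circDensity_eq_limsup (Λ : Set ℝ) : circDensity Λ = limsup (circAverage Λ) atTop := rfl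

lemma circAverage_union_le (Λ₁ Λ₂ : Set ℝ) (r : ℝ) :
    circAverage (Λ₁ ∪ Λ₂) r ≤ circAverage Λ₁ r + circAverage Λ₂ r := by
  have hmeas : Measurable fun t => circChordSum Λ₁ t / ENNReal.ofReal t :=
    (monotone_circChordSum Λ₁).measurable.div ENNReal.measurable_ofReal
  rw [circAverage, circAverage, circAverage, ← mul_add, ← lintegral_add_left hmeas]
  gcongr with t
  rw [← ENNReal.add_div]
  gcongr
  exact circChordSum_union_le Λ₁ Λ₂ t

-- `ENNReal.limsup_add_le` needs `CountableInterFilter`, which `atTop : Filter ℝ` lacks.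
lemma ENNReal.limsup_add_le' {α : Type*} {f : Filter α} (u v : α → ℝ≥0∞) :
    limsup (u + v) f ≤ limsup u f + limsup v f := by
  rcases eq_or_ne (limsup u f) ⊤ with hu | hu
  · simp [hu]
  rcases eq_or_ne (limsup v f) ⊤ with hv | hv
  · simp [hv]
  refine ENNReal.le_of_forall_pos_le_add fun ε hε _ => ?_
  have hε2 : (ε / 2 : ℝ≥0∞) ≠ 0 := by simpa using hε.ne'
  refine limsup_le_of_le (by isBoundedDefault) ?_
  filter_upwards [eventually_lt_of_limsup_lt (ENNReal.lt_add_right hu hε2),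
    eventually_lt_of_limsup_lt (ENNReal.lt_add_right hv hε2)] with x hux hvx
  calc u x + v x ≤ limsup u f + ε / 2 + (limsup v f + ε / 2) := add_le_add hux.le hvx.le
    _ = limsup u f + limsup v f + ε := by rw [add_add_add_comm, ENNReal.add_halves]

lemma circDensity_union_le (Λ₁ Λ₂ : Set ℝ) :
    circDensity (Λ₁ ∪ Λ₂) ≤ circDensity Λ₁ + circDensity Λ₂ :=
  (limsup_le_limsup (Eventually.of_forall (circAverage_union_le Λ₁ Λ₂))).trans
    (ENNReal.limsup_add_le' _ _)

lemma sum_range_indicator_sub_succ_le {v : ℕ → ℝ} (hv : Antitone v) {n : ℕ} (hvn : 0 ≤ v n)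
    {w : ℝ} (hw : 0 ≤ w) {s : Set ℕ} (hs : ∀ k ∈ s, v k ≤ w) :
    ∑ k ∈ Finset.range n, s.indicator (fun k => v k - v (k + 1)) k ≤ w :=
  calc ∑ k ∈ Finset.range n, s.indicator (fun k => v k - v (k + 1)) k
      ≤ ∑ k ∈ Finset.range n, (min (v k) w - min (v (k + 1)) w) := by
        gcongr with k
        by_cases hk : k ∈ s
        · rw [indicator_of_mem hk, min_eq_left (hs k hk),
            min_eq_left ((hv k.le_succ).trans (hs k hk))]
        · rw [indicator_of_notMem hk]
          linarith [min_le_min_right w (hv k.le_succ)]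
    _ = min (v 0) w - min (v n) w := Finset.sum_range_sub' _ n
    _ ≤ w := by linarith [min_le_right (v 0) w, le_min hvn hw]

lemma sum_range_sub_succ_mul_cast (f : ℕ → ℝ) (n : ℕ) :
    ∑ k ∈ Finset.range n, (f k - f (k + 1)) * k = ∑ k ∈ Finset.range n, f (k + 1) - n * f n := by
  induction n with
  | zero => simp
  | succ n ih =>
    rw [Finset.sum_range_succ, ih, Finset.sum_range_succ]
    push_cast
    ring

lemma integral_sqrt_one_sub_sq_zero_one : ∫ x in (0 : ℝ)..1, √(1 - x ^ 2) = π / 4 := by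
  have hint (a b : ℝ) : IntervalIntegrable (fun x : ℝ => √(1 - x ^ 2)) volume a b :=
    (continuous_const.sub (continuous_pow 2)).sqrt.intervalIntegrable a b
  have heven := intervalIntegral.integral_comp_neg (a := 0) (b := 1) fun x : ℝ => √(1 - x ^ 2)
  simp only [neg_sq, neg_zero] at heven
  have := intervalIntegral.integral_add_adjacent_intervals (hint (-1) 0) (hint 0 1)
  linarith [integral_sqrt_one_sub_sq]

lemma sum_sqrt_one_sub_sq_ge {K : ℕ} (hK : 0 < K) :
    K * (π / 4) - 1 ≤ ∑ k ∈ Finset.range K, √(1 - ((k + 1 : ℝ) / K) ^ 2) := by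
  have hK' : (K : ℝ) ≠ 0 := Nat.cast_ne_zero.2 hK.ne'
  set g : ℝ → ℝ := fun x => √(1 - (x / K) ^ 2)
  have hg : AntitoneOn g (Icc 0 (0 + K)) := fun x hx y _ hxy => by
    have := hx.1
    exact Real.sqrt_le_sqrt (by gcongr)
  have hint : ∫ x in (0 : ℝ)..K, g x = K * (π / 4) := by
    rw [intervalIntegral.integral_comp_div (fun x => √(1 - x ^ 2)) hK', zero_div,
      div_self hK', integral_sqrt_one_sub_sq_zero_one, smul_eq_mul]
  -- the left Riemann sum exceeds the right one by `g 0 - g K = 1`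
  have hshift := Finset.sum_range_succ' (fun i : ℕ => g i) K
  rw [Finset.sum_range_succ] at hshift
  push_cast at hshift
  have hg0 : g 0 = 1 := by simp [g]
  have hgK : g K = 0 := by simp [g, div_self hK']
  have hsum := hg.integral_le_sum
  simp only [zero_add] at hsum
  rw [hint] at hsum
  change _ ≤ ∑ i ∈ Finset.range K, g (i + 1)
  linarith

lemma antitone_sqrt_sq_sub_sq {u : ℕ → ℝ} (hu : Monotone u) (hu0 : 0 ≤ u 0) (t : ℝ) :
    Antitone fun k => √(t ^ 2 - u k ^ 2) := fun i j hij => by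
  have := hu0.trans (hu (Nat.zero_le i))
  have := hu hij
  exact Real.sqrt_le_sqrt (by nlinarith)

lemma encard_inter_Icc_eq_tsum_indicator (Λ : Set ℝ) {u t : ℝ} (hut : u ≤ t) :
    ((Λ ∩ Icc (-u) u).encard : ℝ≥0∞) = ∑' x : ↥(Λ ∩ Icc (-t) t), (Icc (-u) u).indicator 1 x := by
  rw [tsum_subtype, indicator_indicator, inter_assoc,
    inter_eq_right.2 (Icc_subset_Icc (neg_le_neg hut) hut), ← ENNReal.tsum_set_one]
  exact tsum_subtype _ 1

lemma sum_ofReal_mul_indicator_Icc_le {u : ℕ → ℝ} (hu : Monotone u) (hu0 : 0 ≤ u 0) (n : ℕ)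
    (t x : ℝ) :
    ∑ k ∈ Finset.range n, ENNReal.ofReal (√(t ^ 2 - u k ^ 2) - √(t ^ 2 - u (k + 1) ^ 2)) *
      (Icc (-u k) (u k)).indicator 1 x ≤ ENNReal.ofReal √(t ^ 2 - x ^ 2) := by
  set v : ℕ → ℝ := fun k => √(t ^ 2 - u k ^ 2)
  have hv : Antitone v := antitone_sqrt_sq_sub_sq hu hu0 t
  set s : Set ℕ := {k | x ∈ Icc (-u k) (u k)}
  have hterm (k : ℕ) : ENNReal.ofReal (v k - v (k + 1)) * (Icc (-u k) (u k)).indicator 1 x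
      = ENNReal.ofReal (s.indicator (fun k => v k - v (k + 1)) k) := by
    by_cases hk : x ∈ Icc (-u k) (u k)
    · rw [indicator_of_mem hk, indicator_of_mem (show k ∈ s from hk), Pi.one_apply, mul_one]
    · rw [indicator_of_notMem hk, indicator_of_notMem (show k ∉ s from hk), mul_zero,
        ENNReal.ofReal_zero]
  refine (Finset.sum_congr rfl fun k _ => hterm k).trans_le ?_
  rw [← ENNReal.ofReal_sum_of_nonneg fun k _ =>
    indicator_nonneg (fun k _ => sub_nonneg.2 (hv k.le_succ)) k]
  refine ENNReal.ofReal_le_ofReal (sum_range_indicator_sub_succ_le hv (Real.sqrt_nonneg _)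
    (Real.sqrt_nonneg _) fun k hk => Real.sqrt_le_sqrt ?_)
  linarith [sq_le_sq' hk.1 hk.2]

lemma sum_ofReal_mul_encard_le_circChordSum (Λ : Set ℝ) {u : ℕ → ℝ} (hu : Monotone u)
    (hu0 : 0 ≤ u 0) {n : ℕ} {t : ℝ} (hun : u n ≤ t) :
    ∑ k ∈ Finset.range n, ENNReal.ofReal (√(t ^ 2 - u k ^ 2) - √(t ^ 2 - u (k + 1) ^ 2)) *
      (Λ ∩ Icc (-u k) (u k)).encard ≤ circChordSum Λ t := by
  set d : ℕ → ℝ := fun k => √(t ^ 2 - u k ^ 2) - √(t ^ 2 - u (k + 1) ^ 2)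
  calc ∑ k ∈ Finset.range n, ENNReal.ofReal (d k) * (Λ ∩ Icc (-u k) (u k)).encard
      = ∑ k ∈ Finset.range n, ENNReal.ofReal (d k) *
          ∑' x : ↥(Λ ∩ Icc (-t) t), (Icc (-u k) (u k)).indicator 1 x := by
        refine Finset.sum_congr rfl fun k hk => ?_
        rw [encard_inter_Icc_eq_tsum_indicator Λ ((hu (Finset.mem_range.1 hk).le).trans hun)]
    _ = ∑' x : ↥(Λ ∩ Icc (-t) t), ∑ k ∈ Finset.range n,
          ENNReal.ofReal (d k) * (Icc (-u k) (u k)).indicator 1 x := by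
        simp only [← ENNReal.tsum_mul_left]
        exact (Summable.tsum_finsetSum fun _ _ => ENNReal.summable).symm
    _ ≤ circChordSum Λ t :=
        ENNReal.tsum_le_tsum fun x => sum_ofReal_mul_indicator_Icc_le hu hu0 n t x

lemma eventually_ofReal_le_encard_Icc {Λ : Set ℝ} {b : ℝ}
    (hb : ENNReal.ofReal b < lowerBeurlingDensity Λ) :
    ∀ᶠ s in atTop, ENNReal.ofReal (2 * b * s) ≤ (Λ ∩ Icc (-s) s).encard := by
  filter_upwards [eventually_lt_of_lt_liminf hb, eventually_gt_atTop 0] with s hs hs0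
  have h := hs.trans_le (iInf_le _ 0)
  rw [zero_sub, zero_add, ENNReal.lt_div_iff_mul_lt
    (Or.inl (ENNReal.ofReal_pos.2 (by positivity)).ne') (Or.inl ENNReal.ofReal_ne_top)] at h
  rw [mul_comm 2 b, mul_assoc, ENNReal.ofReal_mul' (by positivity)]
  exact h.le

lemma mul_sq_le_sum_sub_sqrt_mul {K : ℕ} (hK : 0 < K) {t : ℝ} (ht : 0 ≤ t) :
    (π / 4 - 1 / K) * t ^ 2 ≤ ∑ k ∈ Finset.range K,
      (√(t ^ 2 - (t * k / K) ^ 2) - √(t ^ 2 - (t * ↑(k + 1) / K) ^ 2)) * (t * k / K) := by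
  have hK' : (K : ℝ) ≠ 0 := Nat.cast_ne_zero.2 hK.ne'
  have hsqrt (x : ℝ) : √(t ^ 2 - (t * x / K) ^ 2) = t * √(1 - (x / K) ^ 2) := by
    rw [show t ^ 2 - (t * x / K) ^ 2 = t ^ 2 * (1 - (x / K) ^ 2) by ring,
      Real.sqrt_mul (sq_nonneg t), Real.sqrt_sq ht]
  have habel := sum_range_sub_succ_mul_cast (fun k => √(t ^ 2 - (t * k / K) ^ 2)) K
  simp only [hsqrt, div_self hK', sub_self, one_pow, Real.sqrt_zero, mul_zero, sub_zero] at habel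
  calc (π / 4 - 1 / K) * t ^ 2 = t ^ 2 / K * (K * (π / 4) - 1) := by field_simp
    _ ≤ t ^ 2 / K * ∑ k ∈ Finset.range K, √(1 - ((k + 1 : ℝ) / K) ^ 2) := by
        gcongr
        exact sum_sqrt_one_sub_sq_ge hK
    _ = t / K * ∑ k ∈ Finset.range K,
          (t * √(1 - (k / K) ^ 2) - t * √(1 - (↑(k + 1) / K) ^ 2)) * k := by
        rw [habel, Finset.mul_sum, Finset.mul_sum]
        push_cast
        exact Finset.sum_congr rfl fun k _ => by ring
    _ = _ := by
        simp only [hsqrt, Finset.mul_sum]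
        exact Finset.sum_congr rfl fun k _ => by ring

lemma eventually_mul_sq_le_circChordSum {Λ : Set ℝ} {b : ℝ} (hb : 0 ≤ b)
    (hcount : ∀ᶠ s in atTop, ENNReal.ofReal (2 * b * s) ≤ (Λ ∩ Icc (-s) s).encard)
    {K : ℕ} (hK : 0 < K) :
    ∀ᶠ t in atTop, ENNReal.ofReal (2 * b * (π / 4 - 1 / K) * t ^ 2) ≤ circChordSum Λ t := by
  obtain ⟨s₀, hs₀⟩ := eventually_atTop.1 hcount
  filter_upwards [eventually_ge_atTop (K * max s₀ 0)] with t ht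
  have hK' : (0 : ℝ) < K := Nat.cast_pos.2 hK
  have ht0 : 0 ≤ t := le_trans (by positivity) ht
  set u : ℕ → ℝ := fun k => t * k / K
  have hu : Monotone u := fun i j hij => by simp only [u]; gcongr
  have hu0 : 0 ≤ u 0 := by simp [u]
  have huK : u K = t := by simp only [u]; field_simp
  have hcount' (k : ℕ) : ENNReal.ofReal (2 * b * u k) ≤ (Λ ∩ Icc (-u k) (u k)).encard := by
    rcases Nat.eq_zero_or_pos k with rfl | hk
    · simp [u]
    · refine hs₀ _ ((le_max_left s₀ 0).trans ?_)
      calc max s₀ 0 ≤ t / K := by rw [le_div_iff₀ hK']; linarith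
        _ ≤ u k := by
          simp only [u]
          gcongr
          exact le_mul_of_one_le_right ht0 (Nat.one_le_cast.2 hk)
  set d : ℕ → ℝ := fun k => √(t ^ 2 - u k ^ 2) - √(t ^ 2 - u (k + 1) ^ 2)
  have hd (k : ℕ) : 0 ≤ d k := sub_nonneg.2 (antitone_sqrt_sq_sub_sq hu hu0 t k.le_succ)
  calc ENNReal.ofReal (2 * b * (π / 4 - 1 / K) * t ^ 2)
      ≤ ENNReal.ofReal (∑ k ∈ Finset.range K, d k * (2 * b * u k)) := by
        refine ENNReal.ofReal_le_ofReal ?_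
        calc 2 * b * (π / 4 - 1 / K) * t ^ 2 = 2 * b * ((π / 4 - 1 / K) * t ^ 2) := by ring
          _ ≤ 2 * b * ∑ k ∈ Finset.range K, d k * u k := by
              gcongr
              exact mul_sq_le_sum_sub_sqrt_mul hK ht0
          _ = ∑ k ∈ Finset.range K, d k * (2 * b * u k) := by
              rw [Finset.mul_sum]
              exact Finset.sum_congr rfl fun k _ => by ring
    _ = ∑ k ∈ Finset.range K, ENNReal.ofReal (d k) * ENNReal.ofReal (2 * b * u k) := by
        rw [ENNReal.ofReal_sum_of_nonneg fun k _ =>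
          mul_nonneg (hd k) (mul_nonneg (by positivity) (hu0.trans (hu k.zero_le)))]
        exact Finset.sum_congr rfl fun k _ => ENNReal.ofReal_mul (hd k)
    _ ≤ ∑ k ∈ Finset.range K, ENNReal.ofReal (d k) * (Λ ∩ Icc (-u k) (u k)).encard := by
        gcongr with k
        exact hcount' k
    _ ≤ circChordSum Λ t := sum_ofReal_mul_encard_le_circChordSum Λ hu hu0 huK.le

lemma ofReal_le_lintegral_circChordSum_div {Λ : Set ℝ} {a t₀ r : ℝ} (ha : 0 ≤ a)
    (ht₀ : 0 < t₀) (h : ∀ t, t₀ ≤ t → ENNReal.ofReal (a * t ^ 2) ≤ circChordSum Λ t)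
    (hr : t₀ ≤ r) :
    ENNReal.ofReal (a * (r ^ 2 - t₀ ^ 2) / 2) ≤
      ∫⁻ t in Ioc 0 r, circChordSum Λ t / ENNReal.ofReal t := calc
  ENNReal.ofReal (a * (r ^ 2 - t₀ ^ 2) / 2) = ∫⁻ t in Ioc t₀ r, ENNReal.ofReal (a * t) := by
    rw [← ofReal_integral_eq_lintegral_ofReal, ← intervalIntegral.integral_of_le hr,
      intervalIntegral.integral_const_mul, integral_id]
    · ring_nf
    · exact (continuous_const.mul continuous_id).integrableOn_Ioc
    · exact (ae_restrict_iff' measurableSet_Ioc).2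
        (Eventually.of_forall fun t ht => mul_nonneg ha (ht₀.trans ht.1).le)
  _ ≤ ∫⁻ t in Ioc t₀ r, circChordSum Λ t / ENNReal.ofReal t := by
    refine setLIntegral_mono' measurableSet_Ioc fun t ht => ?_
    have htpos : 0 < t := ht₀.trans ht.1
    rw [ENNReal.le_div_iff_mul_le (Or.inl (ENNReal.ofReal_pos.2 htpos).ne')
      (Or.inl ENNReal.ofReal_ne_top), ← ENNReal.ofReal_mul (mul_nonneg ha htpos.le), mul_assoc,
      ← sq]
    exact h t ht.1.le
  _ ≤ _ := lintegral_mono_set (Ioc_subset_Ioc ht₀.le le_rfl)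

lemma ofReal_le_circDensity_of_eventually_le {Λ : Set ℝ} {a : ℝ} (ha : 0 ≤ a)
    (h : ∀ᶠ t in atTop, ENNReal.ofReal (a * t ^ 2) ≤ circChordSum Λ t) :
    ENNReal.ofReal (2 * a / π) ≤ circDensity Λ := by
  obtain ⟨t₁, ht₁⟩ := eventually_atTop.1 h
  set t₀ := max t₁ 1
  have ht₀ : 0 < t₀ := lt_max_of_lt_right one_pos
  have hge (t : ℝ) (ht : t₀ ≤ t) : ENNReal.ofReal (a * t ^ 2) ≤ circChordSum Λ t :=
    ht₁ t ((le_max_left t₁ 1).trans ht)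
  have hlower : ∀ᶠ r in atTop,
      ENNReal.ofReal (2 * a / π * (1 - t₀ ^ 2 / r ^ 2)) ≤ circAverage Λ r := by
    filter_upwards [eventually_ge_atTop t₀] with r hr
    have hr0 : 0 < r := ht₀.trans_le hr
    calc ENNReal.ofReal (2 * a / π * (1 - t₀ ^ 2 / r ^ 2))
        = ENNReal.ofReal (4 / (π * r ^ 2)) * ENNReal.ofReal (a * (r ^ 2 - t₀ ^ 2) / 2) := by
          rw [← ENNReal.ofReal_mul (by positivity)]
          congr 1
          field_simp
          ring
      _ ≤ circAverage Λ r := by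
          rw [circAverage]
          gcongr
          exact ofReal_le_lintegral_circChordSum_div ha ht₀ hge hr
  have hlim : Tendsto (fun r => ENNReal.ofReal (2 * a / π * (1 - t₀ ^ 2 / r ^ 2))) atTop
      (𝓝 (ENNReal.ofReal (2 * a / π))) := by
    refine ENNReal.tendsto_ofReal ?_
    have : Tendsto (fun r : ℝ => t₀ ^ 2 / r ^ 2) atTop (𝓝 0) :=
      tendsto_const_nhds.div_atTop (tendsto_pow_atTop two_ne_zero)
    simpa using (tendsto_const_nhds (x := 2 * a / π)).mul ((tendsto_const_nhds (x := 1)).sub this)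
  rw [circDensity_eq_limsup, ← hlim.limsup_eq]
  exact limsup_le_limsup hlower

theorem lowerBeurlingDensity_le_circDensity (Λ : Set ℝ) :
    lowerBeurlingDensity Λ ≤ circDensity Λ := by
  refine le_of_forall_lt_imp_le_of_dense fun c hc => ?_
  set b := c.toReal
  have hb : 0 ≤ b := ENNReal.toReal_nonneg
  have hcount := eventually_ofReal_le_encard_Icc (Λ := Λ) (b := b)
    (by rwa [ENNReal.ofReal_toReal hc.ne_top])
  have hK : ∀ᶠ K : ℕ in atTop, ENNReal.ofReal (b - 4 * b / π / K) ≤ circDensity Λ := by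
    filter_upwards [eventually_ge_atTop 2] with K hK
    have hK' : (2 : ℝ) ≤ K := by exact_mod_cast hK
    have ha : 0 ≤ 2 * b * (π / 4 - 1 / K) := by
      have : 1 / (K : ℝ) ≤ 1 / 2 := one_div_le_one_div_of_le two_pos hK'
      nlinarith [Real.pi_gt_three]
    convert ofReal_le_circDensity_of_eventually_le ha
      (eventually_mul_sq_le_circChordSum hb hcount (by omega)) using 2
    field_simp
    ring
  have hlim : Tendsto (fun K : ℕ => ENNReal.ofReal (b - 4 * b / π / K)) atTop
      (𝓝 (ENNReal.ofReal b)) :=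
    ENNReal.tendsto_ofReal (by
      simpa using tendsto_const_nhds.sub (tendsto_const_div_atTop_nhds_zero_nat (4 * b / π)))
  rw [← ENNReal.ofReal_toReal hc.ne_top]
  exact le_of_tendsto hlim hK

/-- If `D⁻(Λ) > 2` and `Λ = Λ₁ ∪ Λ₂`, then `D⁺_circ(Λ₁) > 1` or `D⁺_circ(Λ₂) > 1`. -/
theorem one_lt_circDensity_of_union (Λ Λ₁ Λ₂ : Set ℝ)
    (hΛ : 2 < lowerBeurlingDensity Λ) (hsplit : Λ = Λ₁ ∪ Λ₂) :
    1 < circDensity Λ₁ ∨ 1 < circDensity Λ₂ := by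
  by_contra! h
  have hle : circDensity Λ ≤ 2 := calc
    circDensity Λ ≤ circDensity Λ₁ + circDensity Λ₂ := hsplit ▸ circDensity_union_le Λ₁ Λ₂
    _ ≤ 1 + 1 := add_le_add h.1 h.2
    _ = 2 := one_add_one_eq_two
  exact (hΛ.trans_le (lowerBeurlingDensity_le_circDensity Λ)).not_ge hle
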